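/- For any words u and v, |C(u)| + |C(v)| ≤ |C(uv)| + 1, where C(w) denotes the set of closed factors of w. -/

import Mathlib

variable {α : Type*}

/-- `u` is a factor (contiguous subword) of `w`. -/
def IsFactor (u w : List α) : Prop := ∃ v z : List α, w = v ++ u ++ z

/-- `u` is a border of `w`: a word different from `w` that is both a prefix and a suffix. -/
def IsBorder (u w : List α) : Prop := u ≠ w ∧ u <+: w ∧ u <:+ w

/-- `u` has an internal occurrence in `w`. -/
def HasInternalOcc (u w : List α) : Prop :=
  ∃ v z : List α, v ≠ [] ∧ z ≠ [] ∧ w = v ++ u ++ z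

/-- A word is closed if it is empty or has a border with no internal occurrence. -/
def ClosedWord (w : List α) : Prop :=
  w = [] ∨ ∃ u : List α, IsBorder u w ∧ ¬ HasInternalOcc u w

/-- The set of closed factors of `w`. -/
def closedFactors (w : List α) : Set (List α) := {u | IsFactor u w ∧ ClosedWord u}

/-- A word is CR-poor if it has exactly `|w| + 1` closed factors. -/
def IsCRPoor (w : List α) : Prop := (closedFactors w).ncard = w.length + 1

/-- `w` is a complete return to `u`: exactly two occurrences of `u` in `w`,
one as a prefix and one as a suffix. -/
def IsCompleteReturn (u w : List α) : Prop :=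
  u <+: w ∧ u <:+ w ∧ {i : ℕ | i + u.length ≤ w.length ∧ u <+: w.drop i}.ncard = 2

/-- The set of palindromic factors of `w`. -/
def palFactors (w : List α) : Set (List α) := {u | IsFactor u w ∧ u.reverse = u}

/-- `k`-fold concatenation power of a word. -/
def listPow (u : List α) : ℕ → List α
  | 0 => []
  | k + 1 => u ++ listPow u k

/-- A word is primitive if it is nonempty and not a power `u^k` with `k ≥ 2`. -/
def Primitive (v : List α) : Prop :=
  v ≠ [] ∧ ∀ (u : List α) (k : ℕ), 2 ≤ k → v ≠ listPow u k

/-- `p` is a period of `w`. -/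
def HasPeriod (w : List α) (p : ℕ) : Prop := 0 < p ∧ p ≤ w.length ∧ w.drop p <+: w

/-!
Appending a letter `a` to `x` creates exactly the closed suffixes of `xa` that occur nowhere
else in `xa`, so by induction on `v` it suffices to show that such "new" closed suffixes of `w`
are no more numerous than those of `uw`.

A new closed suffix `s` of `w` may still occur earlier in `uw`. The suffix of `uw` starting at
its last earlier occurrence is then a complete return to `s`, hence closed, and it is longer
than `w`. Iterating leads to a new closed suffix of `uw`. Two such chains cannot end at the same
word: a suffix that is a complete return to a suffix `c` determines `c`, so chains that meet are
nested, while every element of a chain after the first is longer than `w`.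
-/

open Relation

lemma isFactor_iff_isInfix {u w : List α} : IsFactor u w ↔ u <:+: w :=
  ⟨fun ⟨v, z, h⟩ => ⟨v, z, h.symm⟩, fun ⟨v, z, h⟩ => ⟨v, z, h.symm⟩⟩

lemma List.IsSuffix.isFactor {u w : List α} (h : u <:+ w) : IsFactor u w :=
  isFactor_iff_isInfix.mpr h.isInfix

lemma closedFactors_finite (w : List α) : (closedFactors w).Finite :=
  w.sublists.finite_toSet.subset fun _ hu =>
    List.mem_sublists.mpr (isFactor_iff_isInfix.mp hu.1).sublist

lemma closedFactors_nil : closedFactors ([] : List α) = {[]} := by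
  ext u
  simp +contextual [closedFactors, isFactor_iff_isInfix, ClosedWord]

lemma isFactor_dropLast_of_prefix {s d x : List α} (hdx : d <:+ x) (hsd : s <+: d)
    (hlt : s.length < d.length) : IsFactor s x.dropLast := by
  obtain ⟨p, rfl⟩ := hdx
  obtain ⟨t, rfl⟩ := hsd
  have ht : t ≠ [] := by rintro rfl; simp at hlt
  exact ⟨p, t.dropLast, by
    rw [← List.append_assoc, List.dropLast_append_of_ne_nil ht, List.append_assoc]⟩

lemma exists_prefix_of_isFactor_dropLast {s x : List α} (hx : x ≠ [])
    (h : IsFactor s x.dropLast) : ∃ d, d <:+ x ∧ s <+: d ∧ s.length < d.length := by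
  obtain ⟨v, z, h⟩ := h
  refine ⟨s ++ (z ++ [x.getLast hx]), ⟨v, ?_⟩, List.prefix_append _ _, by simp⟩
  conv_rhs => rw [← List.dropLast_append_getLast hx, h]
  simp

/-- The closed suffixes of `x` with no other occurrence in `x`. -/
def newClosedSuffixes (x : List α) : Set (List α) :=
  {s | s <:+ x ∧ ClosedWord s ∧ ¬ IsFactor s x.dropLast}

lemma newClosedSuffixes_subset (x : List α) : newClosedSuffixes x ⊆ closedFactors x :=
  fun _ hs => ⟨hs.1.isFactor, hs.2.1⟩

lemma newClosedSuffixes_finite (x : List α) : (newClosedSuffixes x).Finite :=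
  (closedFactors_finite x).subset (newClosedSuffixes_subset x)

lemma ne_nil_of_mem_newClosedSuffixes {s x : List α} (hs : s ∈ newClosedSuffixes x) :
    x ≠ [] := by
  rintro rfl
  exact hs.2.2 ⟨[], [], by simpa using hs.1⟩

lemma List.IsSuffix.of_isFactor_of_not_isFactor_dropLast {s x : List α} (h : IsFactor s x)
    (hnew : ¬ IsFactor s x.dropLast) : s <:+ x := by
  obtain ⟨v, z, rfl⟩ := h
  rcases eq_or_ne z [] with rfl | hz
  · exact ⟨v, by simp⟩
  · exact absurd ⟨v, z.dropLast, by rw [List.dropLast_append_of_ne_nil hz]⟩ hnew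

lemma closedFactors_append_singleton (x : List α) (a : α) :
    closedFactors (x ++ [a]) = closedFactors x ∪ newClosedSuffixes (x ++ [a]) := by
  have hdrop : (x ++ [a]).dropLast = x := List.dropLast_concat
  ext s
  constructor
  · rintro ⟨hfac, hcl⟩
    by_cases hx : IsFactor s x
    · exact Or.inl ⟨hx, hcl⟩
    · rw [← hdrop] at hx
      exact Or.inr ⟨.of_isFactor_of_not_isFactor_dropLast hfac hx, hcl, hx⟩
  · rintro (⟨⟨v, z, rfl⟩, hcl⟩ | hs)
    · exact ⟨⟨v, z ++ [a], by simp⟩, hcl⟩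
    · exact newClosedSuffixes_subset _ hs

lemma ncard_closedFactors_append_singleton (x : List α) (a : α) :
    (closedFactors (x ++ [a])).ncard =
      (closedFactors x).ncard + (newClosedSuffixes (x ++ [a])).ncard := by
  rw [closedFactors_append_singleton]
  refine Set.ncard_union_eq ?_ (closedFactors_finite x) (newClosedSuffixes_finite _)
  rw [Set.disjoint_left]
  rintro s ⟨hs, -⟩ ⟨-, -, hnew⟩
  exact hnew (by rwa [List.dropLast_concat])

def ReturnStep (x c d : List α) : Prop := d <:+ x ∧ IsBorder c d ∧ ¬ HasInternalOcc c d

namespace ReturnStep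

variable {x c c' d : List α}

lemma closedWord (h : ReturnStep x c d) : ClosedWord d := Or.inr ⟨c, h.2.1, h.2.2⟩

lemma length_lt (h : ReturnStep x c d) : c.length < d.length := by
  obtain ⟨-, ⟨hne, hpre, -⟩, -⟩ := h
  exact lt_of_le_of_ne hpre.length_le fun hl => hne (hpre.eq_of_length hl)

lemma not_length_lt (h : ReturnStep x c d) (h' : ReturnStep x c' d) :
    ¬ c.length < c'.length := by
  intro hlt
  obtain ⟨p, rfl⟩ := List.suffix_of_suffix_length_le h.2.1.2.2 h'.2.1.2.2 hlt.le
  obtain ⟨q, hq⟩ := h'.2.1.2.1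
  have hdq := h'.length_lt
  subst hq
  refine h.2.2 ⟨p, q, ?_, ?_, by simp⟩
  · rintro rfl
    simp at hlt
  · rintro rfl
    simp at hdq

lemma leftUnique (x : List α) : Relator.LeftUnique (ReturnStep x) := by
  intro c c' d h h'
  rcases lt_trichotomy c.length c'.length with hlt | heq | hgt
  · exact absurd hlt (h.not_length_lt h')
  · exact (List.suffix_of_suffix_length_le h.2.1.2.2 h'.2.1.2.2 heq.le).eq_of_length heq
  · exact absurd hgt (h'.not_length_lt h)

/-- Witness: the shortest suffix of `x` having `c` as a proper prefix. -/
lemma exists_of_isFactor_dropLast (hc : c <:+ x) (hx : x ≠ []) (hrep : IsFactor c x.dropLast) :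
    ∃ d, ReturnStep x c d := by
  classical
  have hP : ∃ n, ∃ d : List α, d.length = n ∧ d <:+ x ∧ c <+: d ∧ c.length < d.length :=
    ⟨_, _, rfl, (exists_prefix_of_isFactor_dropLast hx hrep).choose_spec⟩
  obtain ⟨d, hlen, hdx, hcd, hlt⟩ := Nat.find_spec hP
  refine ⟨d, hdx, ⟨fun hcd => hlt.ne (hcd ▸ rfl), hcd,
    List.suffix_of_suffix_length_le hc hdx hlt.le⟩, ?_⟩
  rintro ⟨p, q, hp, hq, rfl⟩
  have hshorter := Nat.find_min' hP
    ⟨c ++ q, rfl, (List.suffix_append p (c ++ q)).trans (by simpa using hdx),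
      List.prefix_append c q, by simpa using List.length_pos_iff.mpr hq⟩
  have hp0 := List.length_pos_iff.mpr hp
  simp only [List.length_append] at hlen hshorter
  omega

lemma length_le_of_reflTransGen (h : ReflTransGen (ReturnStep x) c d) : c.length ≤ d.length := by
  induction h with
  | refl => rfl
  | tail _ hstep ih => exact ih.trans hstep.length_lt.le

end ReturnStep

lemma exists_reflTransGen_mem_newClosedSuffixes {x c : List α} (hx : x ≠ []) (hc : c <:+ x)
    (hcl : ClosedWord c) : ∃ t ∈ newClosedSuffixes x, ReflTransGen (ReturnStep x) c t := by
  induction hn : x.length - c.length using Nat.strong_induction_on generalizing c with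
  | _ n ih =>
  by_cases hrep : IsFactor c x.dropLast
  · obtain ⟨d, hd⟩ := ReturnStep.exists_of_isFactor_dropLast hc hx hrep
    have hdist : x.length - d.length < n := by
      have := hd.length_lt
      have := hd.1.length_le
      omega
    obtain ⟨t, ht, hdt⟩ := ih _ hdist hd.1 hd.closedWord rfl
    exact ⟨t, ht, .head hd hdt⟩
  · exact ⟨c, ⟨hc, hcl, hrep⟩, .refl⟩

lemma eq_of_reflTransGen_returnStep {u w s s' : List α} (hs : s ∈ newClosedSuffixes w)
    (hs' : s' ∈ newClosedSuffixes w) (h : ReflTransGen (ReturnStep (u ++ w)) s s') : s = s' := by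
  rcases reflTransGen_iff_eq_or_transGen.mp h with rfl | h
  · rfl
  obtain ⟨d, hsd, hds'⟩ := TransGen.head'_iff.mp h
  have hwd : w.length < d.length := by
    by_contra! hle
    have hdw : d <:+ w := List.suffix_of_suffix_length_le hsd.1 (List.suffix_append u w) hle
    exact hs.2.2 (isFactor_dropLast_of_prefix hdw hsd.2.1.2.1 hsd.length_lt)
  have := ReturnStep.length_le_of_reflTransGen hds'
  have := hs'.1.length_le
  omega

lemma ncard_newClosedSuffixes_le (u w : List α) :
    (newClosedSuffixes w).ncard ≤ (newClosedSuffixes (u ++ w)).ncard := by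
  have hchain : ∀ s ∈ newClosedSuffixes w, ∃ t ∈ newClosedSuffixes (u ++ w),
      ReflTransGen (ReturnStep (u ++ w)) s t := fun s hs =>
    exists_reflTransGen_mem_newClosedSuffixes
      (by simp [ne_nil_of_mem_newClosedSuffixes hs]) (hs.1.trans (List.suffix_append u w)) hs.2.1
  choose! g hgnew hg using hchain
  refine Set.ncard_le_ncard_of_injOn g hgnew ?_ (newClosedSuffixes_finite _)
  intro s hs s' hs' hgs
  have hs's := (hg s' hs').swap
  rw [← hgs] at hs's
  have hback : Relator.RightUnique (Function.swap (ReturnStep (u ++ w))) :=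
    fun _ _ _ h h' => ReturnStep.leftUnique _ h h'
  rcases (hg s hs).swap.total_of_right_unique hback hs's with h | h
  · exact (eq_of_reflTransGen_returnStep hs' hs h.swap).symm
  · exact eq_of_reflTransGen_returnStep hs hs' h.swap

/-- For any words u and v, |C(u)| + |C(v)| ≤ |C(uv)| + 1. -/
theorem stmt_7 {α : Type*} (u v : List α) :
    (closedFactors u).ncard + (closedFactors v).ncard ≤ (closedFactors (u ++ v)).ncard + 1 := by
  induction v using List.reverseRecOn with
  | nil => simp [closedFactors_nil]
  | append_singleton v a ih =>
    have hv := ncard_closedFactors_append_singleton v a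
    have huv := ncard_closedFactors_append_singleton (u ++ v) a
    have hnew := ncard_newClosedSuffixes_le u (v ++ [a])
    rw [← List.append_assoc] at hnew ⊢
    omega
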